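/- arXiv:2203.03456 — 3 statements merged into one kernel-verified Lean document; each statement's English description precedes it below -/
import Mathlib

section
/- Let G = (V,E,w) be a directed graph with integer weights, let V₁,…,V_q be a partition of V such that every edge inside each G[V_i] has non-negative weight and the graph obtained by contracting each V_i into a single node is acyclic. Then there exists a price function φ : V → ℤ, constant on each V_i, such that w_φ(u,v) ≥ 0 for all (u,v) ∈ E. -/
/-- `FixDAGEdges`: if the vertex set is partitioned into parts `V_1, …, V_q`
(given by `part : V → Fin q`) such that every edge inside a part has non-negative
weight and the graph obtained by contracting each part is acyclic, then there is
a price function, constant on each part, making all edge weights non-negative. -/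
theorem stmt_5 {V : Type*} [Fintype V] (q : ℕ) (E : V → V → Prop) (w : V → V → ℤ)
    (part : V → Fin q)
    (hin : ∀ u v : V, E u v → part u = part v → 0 ≤ w u v)
    (hdag : ∀ i : Fin q, ¬ Relation.TransGen
      (fun i j : Fin q => i ≠ j ∧ ∃ u v : V, E u v ∧ part u = i ∧ part v = j) i i) :
    ∃ φ : V → ℤ, (∀ u v : V, part u = part v → φ u = φ v) ∧
      ∀ u v : V, E u v → 0 ≤ w u v + φ u - φ v := by
  classical
  set R : Fin q → Fin q → Prop :=
    fun i j : Fin q => i ≠ j ∧ ∃ u v : V, E u v ∧ part u = i ∧ part v = j with hR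
  set rank : Fin q → ℕ := fun i => {j : Fin q | Relation.TransGen R j i}.ncard with hrank
  have hmono : ∀ i j : Fin q, R i j → rank i < rank j := by
    intro i j hij
    apply Set.ncard_lt_ncard
    · constructor
      · intro k hk
        exact Relation.TransGen.tail hk hij
      · intro hsub
        have : Relation.TransGen R i i := hsub (Relation.TransGen.single hij)
        exact hdag i this
    · exact Set.toFinite _
  set M : ℕ := (Finset.univ : Finset (V × V)).sup (fun p => (-w p.1 p.2).toNat) with hM
  have hMw : ∀ u v : V, -w u v ≤ (M : ℤ) := by
    intro u v
    calc -w u v ≤ ((-w u v).toNat : ℤ) := Int.self_le_toNat _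
      _ ≤ (M : ℤ) := by
          exact_mod_cast Finset.le_sup (f := fun p : V × V => (-w p.1 p.2).toNat)
            (Finset.mem_univ (u, v))
  refine ⟨fun x => -(M : ℤ) * (rank (part x) : ℤ), ?_, ?_⟩
  · intro u v h
    simp only [h]
  · intro u v hE
    simp only
    by_cases h : part u = part v
    · have := hin u v hE h
      rw [h]
      linarith
    · have hr : rank (part u) < rank (part v) :=
        hmono _ _ ⟨h, u, v, hE, rfl, rfl⟩
      have hr' : (rank (part u) : ℤ) + 1 ≤ (rank (part v) : ℤ) := by exact_mod_cast hr
      have := hMw u v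
      nlinarith [Int.ofNat_nonneg M]
end

section
/- Let G = (V,E,w̄) be a directed graph on n vertices in which all edge weights are multiples of 2n, and let φ be any price function. Define w*(e) = w̄_φ(e) + 1 for all e. If P is a shortest s–v path with respect to w* (with s ≠ v), then P is also a shortest s–v path with respect to w̄_φ. -/
/-!
Along an `s`–`v` path the potential terms of `w̄_φ` telescope to `φ s - φ v`, so the
`w̄_φ`-weights of two `s`–`v` paths differ by a multiple of `2n`; `w*` adds the number of
edges, which is less than `n`. Hence, if `P` were strictly longer than `Q` for `w̄_φ`, it would
be longer by at least `2n`, and the fewer than `n` unit edges of `Q` could not make up for it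
under `w*`.
-/

def walkWeight {V : Type*} (w : V → V → ℤ) (l : List V) : ℤ :=
  ((l.zip l.tail).map fun p => w p.1 p.2).sum

/-- `P` is a shortest simple `u`–`v` path w.r.t. `w` on the graph `E`. -/
def IsShortestSimplePath {V : Type*} (E : V → V → Prop) (w : V → V → ℤ) (u v : V)
    (P : List V) : Prop :=
  P.Chain' E ∧ P.Nodup ∧ P.head? = some u ∧ P.getLast? = some v ∧
    ∀ Q : List V, Q.Chain' E → Q.Nodup → Q.head? = some u → Q.getLast? = some v →
      walkWeight w P ≤ walkWeight w Q

section walkWeight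

variable {V : Type*}

@[simp]
lemma walkWeight_nil (w : V → V → ℤ) : walkWeight w [] = 0 := rfl

@[simp]
lemma walkWeight_singleton (w : V → V → ℤ) (a : V) : walkWeight w [a] = 0 := rfl

@[simp]
lemma walkWeight_cons_cons (w : V → V → ℤ) (a b : V) (l : List V) :
    walkWeight w (a :: b :: l) = w a b + walkWeight w (b :: l) := by
  simp [walkWeight]

lemma walkWeight_add_const (w : V → V → ℤ) (c : ℤ) (l : List V) :
    walkWeight (fun a b => w a b + c) l = walkWeight w l + c * l.tail.length := by
  induction l with
  | nil => simp
  | cons a l ih =>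
    cases l with
    | nil => simp
    | cons b l =>
      simp only [walkWeight_cons_cons, List.tail_cons, List.length_cons] at ih ⊢
      rw [ih]
      push_cast
      ring

lemma walkWeight_add_potential_cons (w : V → V → ℤ) (φ : V → ℤ) (a : V) (l : List V) :
    walkWeight (fun x y => w x y + φ x - φ y) (a :: l) =
      walkWeight w (a :: l) + (φ a - φ ((a :: l).getLast (List.cons_ne_nil a l))) := by
  induction l generalizing a with
  | nil => simp
  | cons b l ih =>
    rw [walkWeight_cons_cons, walkWeight_cons_cons, ih, List.getLast_cons_cons]
    ring

lemma walkWeight_add_potential {w : V → V → ℤ} {φ : V → ℤ} {u v : V} {l : List V}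
    (hu : l.head? = some u) (hv : l.getLast? = some v) :
    walkWeight (fun x y => w x y + φ x - φ y) l = walkWeight w l + (φ u - φ v) := by
  cases l with
  | nil => simp at hu
  | cons a t =>
    obtain rfl : a = u := by simpa using hu
    rw [List.getLast?_eq_some_getLast (List.cons_ne_nil a t), Option.some_inj] at hv
    rw [walkWeight_add_potential_cons, hv]

lemma dvd_walkWeight {w : V → V → ℤ} {d : ℤ} (h : ∀ a b, d ∣ w a b) (l : List V) :
    d ∣ walkWeight w l :=
  List.dvd_sum fun _ hx => by
    obtain ⟨p, -, rfl⟩ := List.mem_map.mp hx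
    exact h p.1 p.2

lemma List.Nodup.length_tail_lt_card [Fintype V] {l : List V} (hl : l.Nodup) (hne : l ≠ []) :
    l.tail.length < Fintype.card V := by
  have := hl.length_le_card
  have := List.length_pos_of_ne_nil hne
  rw [List.length_tail]
  omega

end walkWeight

lemma Int.le_of_add_le_add_of_dvd_sub {a b x y m : ℤ} (hdvd : m ∣ a - b) (hx : 0 ≤ x)
    (hy : y < m) (h : a + x ≤ b + y) : a ≤ b := by
  by_contra! hba
  have := Int.le_of_dvd (sub_pos.mpr hba) hdvd
  linarith

theorem stmt_8_general {V : Type*} [Fintype V] (n : ℕ) (hcard : Fintype.card V = n)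
    (E : V → V → Prop) (wbar : V → V → ℤ) (φ : V → ℤ)
    (hdvd : ∀ u v : V, ((2 * n : ℕ) : ℤ) ∣ wbar u v)
    (s v : V) (P : List V)
    (hP : IsShortestSimplePath E (fun a b => (wbar a b + φ a - φ b) + 1) s v P) :
    IsShortestSimplePath E (fun a b => wbar a b + φ a - φ b) s v P := by
  obtain ⟨hPE, hPnd, hPs, hPv, hPmin⟩ := hP
  refine ⟨hPE, hPnd, hPs, hPv, fun Q hQE hQnd hQs hQv => ?_⟩
  have hstar := hPmin Q hQE hQnd hQs hQv
  simp only [walkWeight_add_const, one_mul] at hstar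
  refine Int.le_of_add_le_add_of_dvd_sub (m := ((2 * n : ℕ) : ℤ)) ?_ (Nat.cast_nonneg _) ?_ hstar
  · rw [walkWeight_add_potential hPs hPv, walkWeight_add_potential hQs hQv,
      add_sub_add_right_eq_sub]
    exact dvd_sub (dvd_walkWeight hdvd P) (dvd_walkWeight hdvd Q)
  · have := hQnd.length_tail_lt_card (List.ne_nil_of_mem (List.mem_of_mem_head? hQs))
    omega

/-- If all weights of `w̄` are multiples of `2n` and `w*(e) = w̄_φ(e) + 1`, then any
shortest `s`–`v` path w.r.t. `w*` (with `s ≠ v`) is also shortest w.r.t. `w̄_φ`. -/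
theorem stmt_8 {V : Type*} [Fintype V] (n : ℕ) (hcard : Fintype.card V = n)
    (hn : 2 ≤ n) (E : V → V → Prop) (wbar : V → V → ℤ) (φ : V → ℤ)
    (hdvd : ∀ u v : V, ((2 * n : ℕ) : ℤ) ∣ wbar u v)
    (s v : V) (hsv : s ≠ v) (P : List V)
    (hP : IsShortestSimplePath E (fun a b => (wbar a b + φ a - φ b) + 1) s v P) :
    IsShortestSimplePath E (fun a b => wbar a b + φ a - φ b) s v P :=
  stmt_8_general n hcard E wbar φ hdvd s v P hP
end

section
/- Let G be a directed graph with integer weights and no negative-weight cycle, let s be a dummy source with zero-weight edges to all vertices, and let B be a positive integer with w(e) ≥ −B for all e. Then for every vertex v, the weight under the clipped weights w_{≥0}(e) = max{0, w(e)} of any shortest s–v path P containing exactly η negative edges (with respect to w) satisfies w_{≥0}(P) ≤ η·B. -/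
lemma clip_aux {V : Type*} (w : V → V → ℤ) (B : ℤ)
    (hw : ∀ u v : V, -B ≤ w u v) (L : List (V × V)) :
    (L.map fun p => max 0 (w p.1 p.2)).sum ≤
      (L.map fun p => w p.1 p.2).sum +
        ((L.filter fun p => decide (w p.1 p.2 < 0)).length : ℤ) * B := by
  induction L with
  | nil => simp
  | cons a l ih =>
    by_cases h : w a.1 a.2 < 0
    · simp [h, max_eq_left h.le]
      have := hw a.1 a.2
      push_cast
      linarith
    · simp [h, max_eq_right (not_lt.mp h)]
      linarith

/-- If `w(e) ≥ -B` for all edges and a path `P` has total weight `≤ 0` and exactly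
`η` negative edges, then its weight under the clipped weights `max 0 (w e)` is at
most `η·B`. -/
theorem stmt_16 {V : Type*} (w : V → V → ℤ) (B : ℤ) (hB : 0 < B)
    (hw : ∀ u v : V, -B ≤ w u v) (P : List V)
    (hP : walkWeight w P ≤ 0) :
    walkWeight (fun u v => max 0 (w u v)) P ≤
      (((P.zip P.tail).filter fun p => decide (w p.1 p.2 < 0)).length : ℤ) * B := by
  have := clip_aux w B hw (P.zip P.tail)
  unfold walkWeight at *
  linarith
end
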